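/- Let x_1, ..., x_n ∈ [a,b] be a finite population with mean μ = (1/n)·Σ_j x_j, and let X_1, ..., X_l be a uniformly random sample of size l drawn without replacement. Then for all t > 0, Pr(|Σ_{i=1}^l X_i − l·μ| ≥ l·t) ≤ 2·exp(−2·l·t² / (b−a)²). -/

import Mathlib

/-!
Hoeffding's reduction to sampling with replacement. For `y ≥ 0`, the sum of `∏ i, y (σ i)` over
the `n! / (n - l)!` arrangements `σ` of `l` population elements is `l! * e_l(y)`, so by
Maclaurin's inequality `e_l(y) ≤ C(n, l) * (e_1(y) / n) ^ l` its average is at most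
`(e_1(y) / n) ^ l`, its value for `l` independent uniform draws. Taking `y j = exp (s * x j)` and
bounding `e_1(y) / n` by Hoeffding's lemma, the moment generating function of the sample sum is
at most `exp (l * (s * μ + s ^ 2 * (b - a) ^ 2 / 8))`; Markov's inequality with
`s = 4 * t / (b - a) ^ 2`, applied to `x` and to `-x`, gives the two-sided tail bound.
-/

open Finset MeasureTheory ProbabilityTheory Real
open scoped Nat

namespace Finset

variable {ι R : Type*}

def esymm [CommSemiring R] (s : Finset ι) (k : ℕ) (f : ι → R) : R :=
  ∑ t ∈ s.powersetCard k, ∏ i ∈ t, f i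

section CommSemiring

variable [CommSemiring R] (s : Finset ι) (f : ι → R)

@[simp]
theorem esymm_zero : s.esymm 0 f = 1 := by
  simp [esymm]

theorem esymm_eq_zero_of_card_lt {k : ℕ} (h : #s < k) : s.esymm k f = 0 := by
  simp [esymm, powersetCard_eq_empty.2 h]

variable [DecidableEq ι]

theorem esymm_succ_insert {j : ι} (hj : j ∉ s) (k : ℕ) :
    (insert j s).esymm (k + 1) f = s.esymm (k + 1) f + f j * s.esymm k f := by
  have hj' : ∀ T ∈ s.powersetCard k, j ∉ T := fun T hT hm => hj ((mem_powersetCard.1 hT).1 hm)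
  have hinj : Set.InjOn (insert j) (s.powersetCard k : Set (Finset ι)) := by
    intro T₁ h₁ T₂ h₂ h
    rw [← erase_insert (hj' T₁ h₁), ← erase_insert (hj' T₂ h₂), h]
  have hdisj : Disjoint (s.powersetCard (k + 1)) ((s.powersetCard k).image (insert j)) :=
    disjoint_right.2 fun U hU hU' => by
      obtain ⟨T, -, rfl⟩ := mem_image.1 hU
      exact hj ((mem_powersetCard.1 hU').1 (mem_insert_self j T))
  rw [esymm, powersetCard_succ_insert hj, sum_union hdisj, sum_image hinj, esymm, esymm,
    mul_sum]
  exact congrArg _ (sum_congr rfl fun T hT => prod_insert (hj' T hT))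

theorem esymm_succ_eq_erase {j : ι} (hj : j ∈ s) (k : ℕ) :
    s.esymm (k + 1) f = (s.erase j).esymm (k + 1) f + f j * (s.erase j).esymm k f := by
  simpa [insert_erase hj] using esymm_succ_insert (s.erase j) f (notMem_erase j s) k

theorem sum_mul_esymm_erase (k : ℕ) :
    ∑ j ∈ s, f j * (s.erase j).esymm k f = (k + 1) * s.esymm (k + 1) f := by
  induction s using Finset.induction_on generalizing k with
  | empty => rw [esymm_eq_zero_of_card_lt ∅ f (by simp), sum_empty, mul_zero]
  | insert a s ha ih =>
    have herase : ∀ j ∈ s, (insert a s).erase j = insert a (s.erase j) := fun j hj =>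
      erase_insert_of_ne fun h => ha (h ▸ hj)
    rw [sum_insert ha, erase_insert ha, sum_congr rfl fun j hj => by rw [herase j hj],
      esymm_succ_insert s f ha]
    cases k with
    | zero =>
      have := ih 0
      simp only [esymm_zero, mul_one] at this ⊢
      rw [this]; push_cast; ring
    | succ m =>
      have hins : ∀ j ∈ s, f j * (insert a (s.erase j)).esymm (m + 1) f =
          f j * (s.erase j).esymm (m + 1) f + f a * (f j * (s.erase j).esymm m f) := fun j hj => by
        rw [esymm_succ_insert _ f fun h => ha (mem_of_mem_erase h)]; ring
      rw [sum_congr rfl hins, sum_add_distrib, ← mul_sum, ih, ih]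
      push_cast; ring

end CommSemiring

section OrderedRing

variable [CommRing R] [LinearOrder R] [IsStrictOrderedRing R] {s : Finset ι} {f : ι → R}

theorem esymm_nonneg (hf : ∀ i ∈ s, 0 ≤ f i) (k : ℕ) : 0 ≤ s.esymm k f :=
  sum_nonneg fun _ ht => prod_nonneg fun i hi => hf i ((mem_powersetCard.1 ht).1 hi)

variable [DecidableEq ι]

theorem monovaryOn_mul_esymm_erase (hf : ∀ i ∈ s, 0 ≤ f i) (k : ℕ) :
    MonovaryOn (fun j => f j * (s.erase j).esymm k f) f s := by
  intro i hi j hj hij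
  cases k with
  | zero => simpa using hij.le
  | succ m =>
    have hji : j ≠ i := fun h => hij.ne (h ▸ rfl)
    set W := (s.erase i).erase j
    have hWi : (s.erase j).erase i = W := erase_right_comm
    beta_reduce
    rw [esymm_succ_eq_erase _ _ (mem_erase.2 ⟨hji, hj⟩),
      esymm_succ_eq_erase _ _ (mem_erase.2 ⟨hji.symm, hi⟩), hWi]
    have hW := esymm_nonneg (s := W) (f := f) fun p hp =>
      hf p (mem_of_mem_erase (mem_of_mem_erase hp))
    nlinarith [hW m, hW (m + 1), hf i hi, hf j hj]

/- `(k + 2) * e_{k+2}(s) = e_1(s) * e_{k+1}(s) - ∑ j ∈ s, f j * (f j * e_k(s \ {j}))`, and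
Chebyshev's sum inequality bounds the last sum from below by
`e_1(s) * (k + 1) * e_{k+1}(s) / #s`. -/
theorem card_mul_esymm_succ_le (hf : ∀ i ∈ s, 0 ≤ f i) (k : ℕ) :
    #s * ((k + 1) * s.esymm (k + 1) f) ≤ (#s - k) * ((∑ i ∈ s, f i) * s.esymm k f) := by
  cases k with
  | zero =>
    have h := sum_mul_esymm_erase s f 0
    simp only [esymm_zero, mul_one, CharP.cast_eq_zero, zero_add, one_mul] at h
    simp [h]
  | succ m =>
    have hsplit : ∑ j ∈ s, f j * (s.erase j).esymm (m + 1) f =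
        (∑ j ∈ s, f j) * s.esymm (m + 1) f -
          ∑ j ∈ s, f j * (s.erase j).esymm m f * f j := by
      rw [sum_mul, ← sum_sub_distrib]
      refine sum_congr rfl fun j hj => ?_
      rw [esymm_succ_eq_erase s f hj]; ring
    have chebyshev := (monovaryOn_mul_esymm_erase hf m).sum_mul_sum_le_card_mul_sum
    rw [sum_mul_esymm_erase] at chebyshev
    rw [← sum_mul_esymm_erase, hsplit]
    push_cast
    nlinarith

end OrderedRing

variable [Field R] [LinearOrder R] [IsStrictOrderedRing R] [DecidableEq ι] {s : Finset ι}
  {f : ι → R}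

theorem esymm_le_choose_mul_pow (hf : ∀ i ∈ s, 0 ≤ f i) (k : ℕ) :
    s.esymm k f ≤ (#s).choose k * ((∑ i ∈ s, f i) / #s) ^ k := by
  induction k with
  | zero => simp
  | succ k ih =>
    rcases lt_or_ge k #s with hk | hk
    · have hs : (0 : R) < #s := by exact_mod_cast pos_of_gt hk
      have hchoose : ((#s : R) - k) * (#s).choose k = (k + 1) * (#s).choose (k + 1) := by
        have := congrArg (Nat.cast (R := R)) (Nat.choose_succ_right_eq #s k)
        push_cast [Nat.cast_sub hk.le] at this
        linarith
      have hstep := card_mul_esymm_succ_le hf k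
      set M := (∑ i ∈ s, f i) / #s
      have hsum : ∑ i ∈ s, f i = #s * M := by unfold M; field_simp
      have hM : 0 ≤ M := div_nonneg (sum_nonneg hf) hs.le
      have hk' : (0 : R) ≤ #s - k := sub_nonneg.2 (by exact_mod_cast hk.le)
      have key : #s * ((k + 1) * s.esymm (k + 1) f) ≤
          #s * ((k + 1) * ((#s).choose (k + 1) * M ^ (k + 1))) :=
        calc #s * ((k + 1) * s.esymm (k + 1) f)
            ≤ (#s - k) * ((∑ i ∈ s, f i) * s.esymm k f) := hstep
          _ ≤ (#s - k) * ((∑ i ∈ s, f i) * ((#s).choose k * M ^ k)) := by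
            gcongr
            exact sum_nonneg hf
          _ = #s * ((k + 1) * ((#s).choose (k + 1) * M ^ (k + 1))) := by
            rw [hsum]; linear_combination (#s * M ^ (k + 1)) * hchoose
      exact le_of_mul_le_mul_left (le_of_mul_le_mul_left key hs) (by positivity)
    · rw [esymm_eq_zero_of_card_lt s f (by omega), Nat.choose_eq_zero_of_lt (by omega)]
      simp

end Finset

section Embedding

variable {α ι : Type*} [Fintype α] [Fintype ι] [DecidableEq ι]

theorem card_embedding_filter_map_univ_eq {T : Finset ι} (hT : #T = Fintype.card α) :
    #{σ : α ↪ ι | univ.map σ = T} = (Fintype.card α)! := by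
  let e : {σ : α ↪ ι // univ.map σ = T} ≃ (α ↪ T) :=
    { toFun σ := σ.1.codRestrict (T : Set ι) fun i => by
        simpa [σ.2] using mem_map_of_mem σ.1 (mem_univ i)
      invFun τ := ⟨τ.trans (Function.Embedding.subtype _), by
        refine eq_of_subset_of_card_le (fun j hj => ?_) (by simp [hT])
        obtain ⟨i, -, rfl⟩ := mem_map.1 hj
        exact (τ i).2⟩
      left_inv _ := rfl
      right_inv _ := rfl }
  rw [← Fintype.card_subtype, Fintype.card_congr e, Fintype.card_embedding_eq, Fintype.card_coe,
    hT, Nat.descFactorial_self]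

theorem sum_embedding_prod_eq_factorial_mul_esymm {R : Type*} [CommSemiring R] (f : ι → R) :
    ∑ σ : α ↪ ι, ∏ i, f (σ i) = (Fintype.card α)! * univ.esymm (Fintype.card α) f := by
  set k := Fintype.card α
  have hmaps : ∀ σ ∈ (univ : Finset (α ↪ ι)), univ.map σ ∈ univ.powersetCard k :=
    fun σ _ => mem_powersetCard.2 ⟨subset_univ _, by simp [k]⟩
  calc ∑ σ : α ↪ ι, ∏ i, f (σ i)
      = ∑ σ : α ↪ ι, ∏ j ∈ univ.map σ, f j :=
        sum_congr rfl fun σ _ => (prod_map univ σ f).symm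
    _ = ∑ T ∈ univ.powersetCard k, ∑ σ with univ.map σ = T, ∏ j ∈ univ.map σ, f j :=
      (sum_fiberwise_of_maps_to hmaps _).symm
    _ = ∑ T ∈ univ.powersetCard k, k ! * ∏ j ∈ T, f j := by
      refine sum_congr rfl fun T hT => ?_
      rw [sum_congr rfl fun σ hσ => by rw [(mem_filter.1 hσ).2], sum_const,
        card_embedding_filter_map_univ_eq (mem_powersetCard.1 hT).2, nsmul_eq_mul]
    _ = k ! * univ.esymm k f := by rw [esymm, mul_sum]

theorem sum_embedding_prod_le_descFactorial_mul_pow {R : Type*} [Field R] [LinearOrder R]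
    [IsStrictOrderedRing R] {f : ι → R} (hf : ∀ j, 0 ≤ f j) :
    ∑ σ : α ↪ ι, ∏ i, f (σ i) ≤
      (Fintype.card ι).descFactorial (Fintype.card α) *
        ((∑ j, f j) / Fintype.card ι) ^ Fintype.card α := by
  rw [sum_embedding_prod_eq_factorial_mul_esymm, Nat.descFactorial_eq_factorial_mul_choose,
    Nat.cast_mul, mul_assoc, ← card_univ]
  gcongr
  exact esymm_le_choose_mul_pow (fun j _ => hf j) _

end Embedding

theorem sum_exp_mul_div_card_le_of_mem_Icc {ι : Type*} [Fintype ι] {a b : ℝ} {x : ι → ℝ}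
    (hx : ∀ j, x j ∈ Set.Icc a b) (s : ℝ) :
    (∑ j, exp (s * x j)) / Fintype.card ι ≤
      exp (s * ((∑ j, x j) / Fintype.card ι) + s ^ 2 * (b - a) ^ 2 / 8) := by
  cases isEmpty_or_nonempty ι
  · simp [(exp_pos _).le]
  let _ : MeasurableSpace ι := ⊤
  have hoeffding := (hasSubgaussianMGF_of_mem_Icc (μ := (PMF.uniformOfFintype ι).toMeasure)
    Measurable.of_discrete.aemeasurable (ae_of_all _ hx)).mgf_le s
  simp only [mgf, PMF.integral_eq_sum, PMF.uniformOfFintype_apply, ENNReal.toReal_inv,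
    ENNReal.toReal_natCast, smul_eq_mul, inv_mul_eq_div, ← sum_div] at hoeffding
  set m := (∑ j, x j) / Fintype.card ι
  calc (∑ j, exp (s * x j)) / Fintype.card ι
      = exp (s * m) * ((∑ j, exp (s * (x j - m))) / Fintype.card ι) := by
        simp only [mul_sub, exp_sub, ← sum_div, mul_div_assoc']
        field_simp
    _ ≤ exp (s * m) * exp (s ^ 2 * (b - a) ^ 2 / 8) := by
        gcongr
        refine hoeffding.trans_eq ?_
        simp only [NNReal.coe_pow, NNReal.coe_div, coe_nnnorm, Real.norm_eq_abs, div_pow, sq_abs]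
        norm_num; ring
    _ = _ := (exp_add _ _).symm

section Sampling

variable {α ι : Type*} [Fintype α] [Fintype ι] [DecidableEq ι] {a b : ℝ} {x : ι → ℝ}

theorem sum_embedding_exp_mul_sum_le (hx : ∀ j, x j ∈ Set.Icc a b) (s : ℝ) :
    ∑ σ : α ↪ ι, exp (s * ∑ i, x (σ i)) ≤
      (Fintype.card ι).descFactorial (Fintype.card α) *
        exp (Fintype.card α *
          (s * ((∑ j, x j) / Fintype.card ι) + s ^ 2 * (b - a) ^ 2 / 8)) := by
  simp only [mul_sum, exp_sum]
  refine (sum_embedding_prod_le_descFactorial_mul_pow (α := α) (f := fun j => exp (s * x j))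
    fun j => (exp_pos _).le).trans ?_
  rw [exp_nat_mul]
  gcongr
  exact sum_exp_mul_div_card_le_of_mem_Icc hx s

theorem card_filter_le_mul_exp_le_sum_exp {β : Type*} (S : Finset β) (g : β → ℝ) (c : ℝ)
    {s : ℝ} (hs : 0 ≤ s) :
    #{i ∈ S | c ≤ g i} * exp (s * c) ≤ ∑ i ∈ S, exp (s * g i) :=
  calc #{i ∈ S | c ≤ g i} * exp (s * c)
      ≤ ∑ i ∈ S with c ≤ g i, exp (s * g i) := by
        rw [← nsmul_eq_mul]
        exact card_nsmul_le_sum _ _ _ fun i hi => by gcongr; exact (mem_filter.1 hi).2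
    _ ≤ ∑ i ∈ S, exp (s * g i) :=
        sum_le_sum_of_subset_of_nonneg (filter_subset _ _) fun _ _ _ => (exp_pos _).le

theorem chernoff_card_filter_le_sum_sub_le (hx : ∀ j, x j ∈ Set.Icc a b) (t : ℝ) {s : ℝ}
    (hs : 0 ≤ s) :
    #{σ : α ↪ ι | Fintype.card α * t ≤
        ∑ i, x (σ i) - Fintype.card α * ((∑ j, x j) / Fintype.card ι)} ≤
      (Fintype.card ι).descFactorial (Fintype.card α) *
        exp (Fintype.card α * (s ^ 2 * (b - a) ^ 2 / 8 - s * t)) := by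
  have mgf := sum_embedding_exp_mul_sum_le (α := α) hx s
  set k := Fintype.card α
  set m := (∑ j, x j) / Fintype.card ι
  have markov := card_filter_le_mul_exp_le_sum_exp univ
    (fun σ : α ↪ ι => ∑ i, x (σ i) - k * m) (k * t) hs
  have hshift : ∑ σ : α ↪ ι, exp (s * (∑ i, x (σ i) - k * m)) =
      (∑ σ : α ↪ ι, exp (s * ∑ i, x (σ i))) * exp (-(s * (k * m))) := by
    rw [sum_mul]
    exact sum_congr rfl fun σ _ => by rw [← exp_add]; ring_nf
  calc _ = _ * exp (s * (k * t)) * exp (-(s * (k * t))) := by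
        rw [mul_assoc, ← exp_add, add_neg_cancel, exp_zero, mul_one]
    _ ≤ (∑ σ : α ↪ ι, exp (s * ∑ i, x (σ i))) * exp (-(s * (k * m))) *
          exp (-(s * (k * t))) := by
        rw [← hshift]
        exact mul_le_mul_of_nonneg_right markov (exp_pos _).le
    _ ≤ (Fintype.card ι).descFactorial k * exp (k * (s * m + s ^ 2 * (b - a) ^ 2 / 8)) *
          exp (-(s * (k * m))) * exp (-(s * (k * t))) := by
        gcongr
    _ = _ := by
        rw [mul_assoc, mul_assoc, ← exp_add, ← exp_add]
        ring_nf

theorem card_filter_le_sum_sub_le (hx : ∀ j, x j ∈ Set.Icc a b) {t : ℝ} (ht : 0 ≤ t) :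
    #{σ : α ↪ ι | Fintype.card α * t ≤
        ∑ i, x (σ i) - Fintype.card α * ((∑ j, x j) / Fintype.card ι)} ≤
      (Fintype.card ι).descFactorial (Fintype.card α) *
        exp (-2 * Fintype.card α * t ^ 2 / (b - a) ^ 2) := by
  -- this `s` minimises the exponent; when `a = b` both exponents are `0` by division by zero
  refine (chernoff_card_filter_le_sum_sub_le hx t (s := 4 * t / (b - a) ^ 2)
    (by positivity)).trans_eq ?_
  rcases eq_or_ne (b - a) 0 with h | h
  · simp [h]
  · congr 2
    field_simp
    ring

theorem card_filter_le_abs_sum_sub_le (hx : ∀ j, x j ∈ Set.Icc a b) {t : ℝ} (ht : 0 ≤ t) :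
    #{σ : α ↪ ι | Fintype.card α * t ≤
        |∑ i, x (σ i) - Fintype.card α * ((∑ j, x j) / Fintype.card ι)|} ≤
      2 * (Fintype.card ι).descFactorial (Fintype.card α) *
        exp (-2 * Fintype.card α * t ^ 2 / (b - a) ^ 2) := by
  have upper := card_filter_le_sum_sub_le (α := α) hx ht
  have lower := card_filter_le_sum_sub_le (α := α) (x := fun j => -x j) (a := -b) (b := -a)
    (fun j => ⟨neg_le_neg (hx j).2, neg_le_neg (hx j).1⟩) ht
  simp only [sum_neg_distrib, neg_div, mul_neg, sub_neg_eq_add,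
    neg_add_eq_sub] at lower
  simp only [le_abs, neg_sub, filter_or]
  refine (Nat.cast_le.2 (card_union_le _ _)).trans ?_
  push_cast
  linarith

end Sampling

theorem PMF.toMeasure_uniformOfFintype_le_ofReal {Ω : Type*} [Fintype Ω] [Nonempty Ω]
    [MeasurableSpace Ω] {P : Ω → Prop} [DecidablePred P] (hP : MeasurableSet {ω | P ω})
    {r : ℝ} (h : #{ω | P ω} ≤ Fintype.card Ω * r) :
    (uniformOfFintype Ω).toMeasure {ω | P ω} ≤ ENNReal.ofReal r := by
  rw [toMeasure_uniformOfFintype_apply _ hP]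
  simp only [Set.coe_ofPred, Fintype.card_subtype]
  refine ENNReal.div_le_of_le_mul ?_
  have hr : 0 ≤ r := nonneg_of_mul_nonneg_right ((Nat.cast_nonneg _).trans h) (by positivity)
  rw [← ENNReal.ofReal_natCast, ← ENNReal.ofReal_natCast (Fintype.card Ω),
    ← ENNReal.ofReal_mul hr]
  exact ENNReal.ofReal_le_ofReal (by linarith)

theorem hoeffding_without_replacement_general (n l : ℕ) (hln : l ≤ n) (a b : ℝ) (x : Fin n → ℝ)
    (hx : ∀ j, x j ∈ Set.Icc a b) (μ : ℝ) (hμ : μ = (1 / (n : ℝ)) * ∑ j, x j) (t : ℝ)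
    (ht : 0 < t) :
    haveI : MeasurableSpace (Fin l ↪ Fin n) := ⊤
    haveI : Nonempty (Fin l ↪ Fin n) := ⟨Fin.castLEEmb hln⟩
    ((PMF.uniformOfFintype (Fin l ↪ Fin n)).toMeasure
        {σ | (l : ℝ) * t ≤ |(∑ i, x (σ i)) - (l : ℝ) * μ|}) ≤
      ENNReal.ofReal (2 * Real.exp (-2 * (l : ℝ) * t ^ 2 / (b - a) ^ 2)) := by
  rw [one_div_mul_eq_div] at hμ
  have hcount := card_filter_le_abs_sum_sub_le (α := Fin l) hx ht.le
  simp only [Fintype.card_fin, ← hμ] at hcount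
  let _ : MeasurableSpace (Fin l ↪ Fin n) := ⊤
  have : Nonempty (Fin l ↪ Fin n) := ⟨Fin.castLEEmb hln⟩
  refine PMF.toMeasure_uniformOfFintype_le_ofReal MeasurableSpace.measurableSet_top ?_
  rw [Fintype.card_embedding_eq, Fintype.card_fin, Fintype.card_fin]
  linarith

theorem hoeffding_without_replacement (n l : ℕ) (hn : 0 < n) (hl : 0 < l)
    (hln : l ≤ n) (a b : ℝ) (x : Fin n → ℝ) (hx : ∀ j, x j ∈ Set.Icc a b)
    (μ : ℝ) (hμ : μ = (1 / (n : ℝ)) * ∑ j, x j) (t : ℝ) (ht : 0 < t) :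
    haveI : MeasurableSpace (Fin l ↪ Fin n) := ⊤
    haveI : Nonempty (Fin l ↪ Fin n) := ⟨Fin.castLEEmb hln⟩
    ((PMF.uniformOfFintype (Fin l ↪ Fin n)).toMeasure
        {σ | (l : ℝ) * t ≤ |(∑ i, x (σ i)) - (l : ℝ) * μ|}) ≤
      ENNReal.ofReal (2 * Real.exp (-2 * (l : ℝ) * t ^ 2 / (b - a) ^ 2)) :=
  hoeffding_without_replacement_general n l hln a b x hx μ hμ t ht
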